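/- Let A ∈ L(H)⁺ and let S be a closed subspace of H such that the pair (A,S) is compatible. Then the set P(A,S) of A-Hermitian projections with range S is the affine manifold P_{A,S} + L(S^⊥, N(A) ∩ S), i.e., every element of P(A,S) differs from the distinguished element P_{A,S} by an operator that vanishes on S and maps S^⊥ into N(A) ∩ S. -/

import Mathlib

/-!
Write `P` for the orthogonal projection onto `S`. An operator `Q` is an idempotent with range `S`
exactly when `P Q = Q` and `Q P = P`, and for such `Q` the `A`-symmetry `A Q = Q* A` is equivalent
to the single equation `P A Q = P A`. All three conditions are affine in `Q`, so two elements of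
`P(A,S)` differ by some `Z` with `Z P = 0`, `P Z = Z` and `P A Z = 0`. The last two give
`Z* A Z = Z* P A Z = 0`, which for `A ≥ 0` forces `A Z = 0`; conversely such a `Z` may be added
to any element of `P(A,S)`. Finally `P + D` lies in `P(A,S)`: `D` takes values in
`closure R(P A P) ⊆ S`, and it vanishes on `S` because there `P A P · D = P A (I - P)` is zero while
`closure R(P A P) = N(P A P)ᗮ`.
-/

open ContinuousLinearMap

/-- `P(A,S)`: the set of `A`-Hermitian bounded projections with range `S`. -/
def PAS {H : Type*} [NormedAddCommGroup H] [InnerProductSpace ℂ H] [CompleteSpace H]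
    (A : H →L[ℂ] H) (S : Submodule ℂ H) : Set (H →L[ℂ] H) :=
  {Q | Q ∘L Q = Q ∧ LinearMap.range (Q : H →ₗ[ℂ] H) = S ∧ A ∘L Q = adjoint Q ∘L A}

section StarMul

variable {R : Type*} [Semigroup R] [StarMul R]

/-- `p * q = q` and `q * p = p` say that `q` is an idempotent with the same range as `p`. -/
def aHermitianProjOnto (a p : R) : Set R :=
  {q | p * q = q ∧ q * p = p ∧ a * q = star q * a}

theorem mul_eq_star_mul_iff_mul_mul_eq {a p q : R} (ha : IsSelfAdjoint a) (hp : IsSelfAdjoint p)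
    (hpq : p * q = q) (hqp : q * p = p) : a * q = star q * a ↔ p * a * q = p * a := by
  have hpq' : star q * p = star q := by simpa [hp.star_eq] using congrArg star hpq
  have hqp' : p * star q = p := by simpa [hp.star_eq] using congrArg star hqp
  constructor
  · intro h
    rw [mul_assoc, h, ← mul_assoc, hqp']
  · intro h
    have h' : star q * a * p = a * p := by
      simpa [ha.star_eq, hp.star_eq, mul_assoc] using congrArg star h
    calc a * q = a * p * q := by rw [mul_assoc, hpq]
      _ = star q * a * q := by rw [← h', mul_assoc _ p, hpq]
      _ = star q * (p * a * q) := by rw [← mul_assoc, ← mul_assoc, hpq']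
      _ = star q * a := by rw [h, ← mul_assoc, hpq']

theorem mem_aHermitianProjOnto_iff {a p q : R} (ha : IsSelfAdjoint a) (hp : IsSelfAdjoint p) :
    q ∈ aHermitianProjOnto a p ↔ p * q = q ∧ q * p = p ∧ p * a * q = p * a := by
  refine ⟨fun ⟨hpq, hqp, h⟩ => ⟨hpq, hqp, ?_⟩, fun ⟨hpq, hqp, h⟩ => ⟨hpq, hqp, ?_⟩⟩
  · exact (mul_eq_star_mul_iff_mul_mul_eq ha hp hpq hqp).1 h
  · exact (mul_eq_star_mul_iff_mul_mul_eq ha hp hpq hqp).2 h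

end StarMul

section CStarAlgebra

variable {A : Type*} [CStarAlgebra A] [PartialOrder A] [StarOrderedRing A]

theorem mul_eq_zero_of_star_mul_mul_eq_zero {a z : A} (ha : 0 ≤ a) (h : star z * a * z = 0) :
    a * z = 0 := by
  obtain ⟨b, rfl⟩ := CStarAlgebra.nonneg_iff_eq_star_mul_self.mp ha
  have hbz : b * z = 0 :=
    (CStarRing.star_mul_self_eq_zero_iff _).mp (by simpa [star_mul, mul_assoc] using h)
  rw [mul_assoc, hbz, mul_zero]

theorem aHermitianProjOnto_eq {a p q₀ : A} (ha : 0 ≤ a) (hp : IsSelfAdjoint p)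
    (hq₀ : q₀ ∈ aHermitianProjOnto a p) :
    aHermitianProjOnto a p = {q | ∃ z, z * p = 0 ∧ a * z = 0 ∧ p * z = z ∧ q = q₀ + z} := by
  obtain ⟨hpq₀, hq₀p, haq₀⟩ := (mem_aHermitianProjOnto_iff (.of_nonneg ha) hp).1 hq₀
  ext q
  rw [Set.mem_ofPred_eq, mem_aHermitianProjOnto_iff (.of_nonneg ha) hp]
  constructor
  · rintro ⟨hpq, hqp, haq⟩
    have hpz : p * (q - q₀) = q - q₀ := by rw [mul_sub, hpq, hpq₀]
    have hpaz : p * a * (q - q₀) = 0 := by rw [mul_sub, haq, haq₀, sub_self]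
    refine ⟨q - q₀, by rw [sub_mul, hqp, hq₀p, sub_self], ?_, hpz, by abel⟩
    apply mul_eq_zero_of_star_mul_mul_eq_zero ha
    calc star (q - q₀) * a * (q - q₀) = star (p * (q - q₀)) * a * (q - q₀) := by rw [hpz]
      _ = star (q - q₀) * (p * a * (q - q₀)) := by
        rw [star_mul, hp.star_eq]; simp only [mul_assoc]
      _ = 0 := by rw [hpaz, mul_zero]
  · rintro ⟨z, hzp, haz, hpz, rfl⟩
    refine ⟨by rw [mul_add, hpq₀, hpz], by rw [add_mul, hq₀p, hzp, add_zero], ?_⟩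
    rw [mul_add, haq₀, mul_assoc, haz, mul_zero, add_zero]

end CStarAlgebra

section Projections

variable {R M : Type*} [Semiring R] [TopologicalSpace M] [AddCommMonoid M] [Module R M]

theorem mul_eq_self_iff_range_le {P Q : M →L[R] M} (hP : IsIdempotentElem P) :
    P * Q = Q ↔ LinearMap.range (Q : M →ₗ[R] M) ≤ LinearMap.range (P : M →ₗ[R] M) := by
  have hP' : IsIdempotentElem (P : M →ₗ[R] M) := by
    rw [IsIdempotentElem, ← toLinearMap_mul, hP.eq]
  rw [← LinearMap.IsIdempotentElem.comp_eq_right_iff hP', ← toLinearMap_comp, ← mul_def, coe_inj]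

theorem isIdempotentElem_and_range_eq_iff {P Q : M →L[R] M} (hP : IsIdempotentElem P) :
    IsIdempotentElem Q ∧ LinearMap.range (Q : M →ₗ[R] M) = LinearMap.range (P : M →ₗ[R] M) ↔
      P * Q = Q ∧ Q * P = P := by
  constructor
  · rintro ⟨hQ, hQP⟩
    exact ⟨(mul_eq_self_iff_range_le hP).2 hQP.le, (mul_eq_self_iff_range_le hQ).2 hQP.ge⟩
  · rintro ⟨hPQ, hQP⟩
    have hQ : IsIdempotentElem Q := by
      calc Q * Q = Q * (P * Q) := by rw [hPQ]
        _ = Q := by rw [← mul_assoc, hQP, hPQ]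
    exact ⟨hQ, le_antisymm ((mul_eq_self_iff_range_le hP).1 hPQ)
      ((mul_eq_self_iff_range_le hQ).1 hQP)⟩

theorem range_le_ker_iff_mul_eq_zero {f g : M →L[R] M} :
    LinearMap.range (f : M →ₗ[R] M) ≤ LinearMap.ker (g : M →ₗ[R] M) ↔ g * f = 0 := by
  rw [LinearMap.range_le_ker_iff, ← toLinearMap_comp, ← mul_def, ← toLinearMap_zero, coe_inj]

end Projections

section InnerProductSpace

variable {𝕜 E : Type*} [RCLike 𝕜] [NormedAddCommGroup E] [InnerProductSpace 𝕜 E]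

theorem ContinuousLinearMap.eq_zero_of_mem_closure_range_adjoint {F : Type*} [NormedAddCommGroup F]
    [InnerProductSpace 𝕜 F] [CompleteSpace E] [CompleteSpace F] {T : E →L[𝕜] F} {x : E}
    (hx : x ∈ (LinearMap.range (adjoint T : F →ₗ[𝕜] E)).topologicalClosure) (hTx : T x = 0) :
    x = 0 := by
  rw [← orthogonal_ker] at hx
  exact inner_self_eq_zero.mp (Submodule.inner_right_of_mem_orthogonal hTx hx)

variable (S : Submodule 𝕜 E) [S.HasOrthogonalProjection]

theorem Submodule.starProjection_mul_eq_self_iff {T : E →L[𝕜] E} :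
    S.starProjection * T = T ↔ LinearMap.range (T : E →ₗ[𝕜] E) ≤ S := by
  rw [mul_eq_self_iff_range_le S.isIdempotentElem_starProjection, S.range_starProjection]

theorem Submodule.mul_starProjection_eq_zero_iff {T : E →L[𝕜] E} :
    T * S.starProjection = 0 ↔ ∀ s ∈ S, T s = 0 := by
  refine ⟨fun h s hs => ?_,
    fun h => ContinuousLinearMap.ext fun x => h _ (S.starProjection_apply_mem x)⟩
  rw [← S.starProjection_eq_self_iff.2 hs, ← mul_apply_eq_comp, h, zero_apply]

variable [CompleteSpace E]

theorem starProjection_add_mem_aHermitianProjOnto {A D : E →L[𝕜] E} (hA : IsSelfAdjoint A)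
    (hD : (S.starProjection ∘L A ∘L S.starProjection) ∘L D =
      S.starProjection ∘L A ∘L (1 - S.starProjection))
    (hDran : LinearMap.range (D : E →ₗ[𝕜] E) ≤ (LinearMap.range
      (adjoint (S.starProjection ∘L A ∘L S.starProjection) : E →ₗ[𝕜] E)).topologicalClosure) :
    S.starProjection + D ∈ aHermitianProjOnto A S.starProjection := by
  set P := S.starProjection
  have hPsa : IsSelfAdjoint P := isSelfAdjoint_starProjection S
  have hPP : IsIdempotentElem P := S.isIdempotentElem_starProjection
  have hS : IsClosed (S : Set E) := S.orthogonal_orthogonal ▸ Sᗮ.isClosed_orthogonal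
  have hranT : LinearMap.range (adjoint (P ∘L A ∘L P) : E →ₗ[𝕜] E) ≤ S := by
    rw [adjoint_comp, adjoint_comp, hPsa.adjoint_eq]
    rintro _ ⟨x, rfl⟩
    exact S.starProjection_apply_mem _
  have hPD : P * D = D := S.starProjection_mul_eq_self_iff.2
    (hDran.trans (Submodule.topologicalClosure_minimal _ hranT hS))
  have hDP : D * P = 0 := by
    refine S.mul_starProjection_eq_zero_iff.2 fun s hs =>
      eq_zero_of_mem_closure_range_adjoint (hDran ⟨s, rfl⟩) ?_
    have hPs : P s = s := S.starProjection_eq_self_iff.2 hs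
    simpa [hPs] using congr($hD s)
  have hPAD : P * A * D = P * A - P * A * P :=
    calc P * A * D = P * (A * P) * D := by simp only [mul_assoc, hPD]
      _ = P * (A * (1 - P)) := by simpa only [← mul_def] using hD
      _ = P * A - P * A * P := by simp only [mul_sub, mul_one, mul_assoc]
  rw [mem_aHermitianProjOnto_iff hA hPsa]
  exact ⟨by rw [mul_add, hPP.eq, hPD], by rw [add_mul, hPP.eq, hDP, add_zero],
    by rw [mul_add, hPAD]; abel⟩

end InnerProductSpace

theorem PAS_eq_aHermitianProjOnto {H : Type*} [NormedAddCommGroup H] [InnerProductSpace ℂ H]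
    [CompleteSpace H] (A : H →L[ℂ] H) (S : Submodule ℂ H) [S.HasOrthogonalProjection] :
    PAS A S = aHermitianProjOnto A S.starProjection := by
  ext Q
  simp only [PAS, aHermitianProjOnto, Set.mem_ofPred_eq, ← mul_def, ← star_eq_adjoint, ← and_assoc]
  refine and_congr_left' ?_
  conv_lhs => rw [← S.range_starProjection]
  exact isIdempotentElem_and_range_eq_iff S.isIdempotentElem_starProjection

theorem stmt_8_general
    {H : Type*} [NormedAddCommGroup H] [InnerProductSpace ℂ H] [CompleteSpace H]
    (A : H →L[ℂ] H) (hA : A.IsPositive)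
    (S : Submodule ℂ H) [CompleteSpace S]
    -- `Ps` is the orthogonal projection onto `S`, viewed as an operator on `H`.
    (Ps : H →L[ℂ] H) (hPs : Ps = S.subtypeL ∘L S.orthogonalProjectionOnto)
    -- `D` is the reduced solution of the equation `(P A P) X = P A (I - P)`:
    -- the unique solution whose range lies in the closure of the range of `(P A P)* = P A P`.
    (D : H →L[ℂ] H) (hD : (Ps ∘L A ∘L Ps) ∘L D = Ps ∘L A ∘L (1 - Ps))
    (hDran : LinearMap.range (D : H →ₗ[ℂ] H) ≤
      (LinearMap.range ((adjoint (Ps ∘L A ∘L Ps) : H →L[ℂ] H) : H →ₗ[ℂ] H)).topologicalClosure) :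
    PAS A S = {Q : H →L[ℂ] H | ∃ Z : H →L[ℂ] H,
      (∀ s ∈ S, Z s = 0) ∧ LinearMap.range (Z : H →ₗ[ℂ] H) ≤ LinearMap.ker (A : H →ₗ[ℂ] H) ⊓ S ∧
      Q = (Ps + D) + Z} := by
  obtain rfl : Ps = S.starProjection := hPs
  rw [PAS_eq_aHermitianProjOnto, aHermitianProjOnto_eq ((nonneg_iff_isPositive A).2 hA)
    (isSelfAdjoint_starProjection S)
    (starProjection_add_mem_aHermitianProjOnto S hA.isSelfAdjoint hD hDran)]
  ext Q
  simp only [Set.mem_ofPred_eq, S.mul_starProjection_eq_zero_iff, le_inf_iff,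
    range_le_ker_iff_mul_eq_zero, S.starProjection_mul_eq_self_iff, and_assoc]

theorem stmt_8
    {H : Type*} [NormedAddCommGroup H] [InnerProductSpace ℂ H] [CompleteSpace H]
    (A : H →L[ℂ] H) (hA : A.IsPositive)
    (S : Submodule ℂ H) [CompleteSpace S]
    (hcompat : (PAS A S).Nonempty)
    -- `Ps` is the orthogonal projection onto `S`, viewed as an operator on `H`.
    (Ps : H →L[ℂ] H) (hPs : Ps = S.subtypeL ∘L S.orthogonalProjectionOnto)
    -- `D` is the reduced solution of the equation `(P A P) X = P A (I - P)`:
    -- the unique solution whose range lies in the closure of the range of `(P A P)* = P A P`.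
    (D : H →L[ℂ] H) (hD : (Ps ∘L A ∘L Ps) ∘L D = Ps ∘L A ∘L (1 - Ps))
    (hDran : LinearMap.range (D : H →ₗ[ℂ] H) ≤
      (LinearMap.range ((adjoint (Ps ∘L A ∘L Ps) : H →L[ℂ] H) : H →ₗ[ℂ] H)).topologicalClosure) :
    PAS A S = {Q : H →L[ℂ] H | ∃ Z : H →L[ℂ] H,
      (∀ s ∈ S, Z s = 0) ∧ LinearMap.range (Z : H →ₗ[ℂ] H) ≤ LinearMap.ker (A : H →ₗ[ℂ] H) ⊓ S ∧
      Q = (Ps + D) + Z} :=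
  stmt_8_general A hA S Ps hPs D hD hDran
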